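/- arXiv:2312.03765 — 2 statements merged into one kernel-verified Lean document; each statement's English description precedes it below -/
import Mathlib

section
/- Let X be a perfectly normal topological space, A ⊆ X both Fσ and Gδ, and suppose there exists a continuous map g : X \ A → A. Then there exists a linear operator φ* from the space of real-valued first Borel class functions on A to the space of real-valued first Borel class functions on X such that: (1) φ*(f) restricted to A equals f; (2) φ* is positive (f ≥ 0 implies φ*(f) ≥ 0); (3) φ* maps the constant function 1 to the constant function 1; (4) for bounded f, sup_{x∈X} |φ*(f)(x)| = sup_{a∈A} |f(a)|. -/
open Set Filter Topology

def IsFSigma {X : Type*} [TopologicalSpace X] (s : Set X) : Prop :=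
  ∃ F : ℕ → Set X, (∀ n, IsClosed (F n)) ∧ s = ⋃ n, F n

def FirstBorelClass {X Y : Type*} [TopologicalSpace X] [TopologicalSpace Y] (f : X → Y) : Prop :=
  ∀ U : Set Y, IsOpen U → IsFSigma (f ⁻¹' U)

lemma IsClosed.isFSigma' {X : Type*} [TopologicalSpace X] {s : Set X} (h : IsClosed s) :
    IsFSigma s := ⟨fun _ => s, fun _ => h, (iUnion_const s).symm⟩

lemma isFSigma_iUnion {X : Type*} [TopologicalSpace X] {s : ℕ → Set X}
    (h : ∀ n, IsFSigma (s n)) : IsFSigma (⋃ n, s n) := by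
  choose F hF hs using h
  refine ⟨fun p => F p.unpair.1 p.unpair.2, fun p => hF _ _, ?_⟩
  ext x
  simp only [mem_iUnion]
  constructor
  · rintro ⟨n, hn⟩
    rw [hs n] at hn
    obtain ⟨m, hm⟩ := mem_iUnion.1 hn
    exact ⟨Nat.pair n m, by simpa [Nat.unpair_pair] using hm⟩
  · rintro ⟨p, hp⟩
    exact ⟨p.unpair.1, by rw [hs]; exact mem_iUnion.2 ⟨p.unpair.2, hp⟩⟩

lemma IsFSigma.union' {X : Type*} [TopologicalSpace X] {s t : Set X}
    (hs : IsFSigma s) (ht : IsFSigma t) : IsFSigma (s ∪ t) := by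
  obtain ⟨F, hF, rfl⟩ := hs
  obtain ⟨G, hG, rfl⟩ := ht
  exact ⟨fun n => F n ∪ G n, fun n => (hF n).union (hG n), (iUnion_union_distrib F G).symm⟩

lemma IsFSigma.inter_closed {X : Type*} [TopologicalSpace X] {s t : Set X}
    (hs : IsFSigma s) (ht : IsClosed t) : IsFSigma (s ∩ t) := by
  obtain ⟨F, hF, rfl⟩ := hs
  exact ⟨fun n => F n ∩ t, fun n => (hF n).inter ht, by rw [iUnion_inter]⟩

theorem extension_operator_firstBorelClass {X : Type*} [TopologicalSpace X]
    (hX : ∀ U : Set X, IsOpen U → IsFSigma U) (A : Set X)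
    (hFσ : IsFSigma A) (hGδ : IsGδ A)
    (g : X → X) (hg : ContinuousOn g Aᶜ) (hgA : MapsTo g Aᶜ A) :
    ∃ T : (A → ℝ) → (X → ℝ),
      (∀ f₁ f₂ : A → ℝ, T (f₁ + f₂) = T f₁ + T f₂) ∧
      (∀ (c : ℝ) (f : A → ℝ), T (c • f) = c • T f) ∧
      (∀ f : A → ℝ, FirstBorelClass f → FirstBorelClass (T f)) ∧
      (∀ (f : A → ℝ) (x : X) (hx : x ∈ A), T f x = f ⟨x, hx⟩) ∧
      (∀ f : A → ℝ, 0 ≤ f → 0 ≤ T f) ∧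
      (T 1 = 1) ∧
      (∀ f : A → ℝ, Bornology.IsBounded (range f) →
        (⨆ x : X, |T f x|) = ⨆ a : A, |f a|) := by
  classical
  -- the retraction
  set φ : X → A := fun x => if h : x ∈ A then ⟨x, h⟩ else ⟨g x, hgA h⟩ with hφ
  have hφA : ∀ (x : X) (hx : x ∈ A), φ x = ⟨x, hx⟩ := fun x hx => dif_pos hx
  have hφA' : ∀ (x : X) (hx : x ∉ A), φ x = ⟨g x, hgA hx⟩ := fun x hx => dif_neg hx
  have hφsurj : Function.Surjective φ := fun a => ⟨a.1, by rw [hφA a.1 a.2]⟩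
  -- Aᶜ is Fσ
  have hAc : IsFSigma Aᶜ := by
    obtain ⟨U, hU, rfl⟩ := hGδ.eq_iInter_nat
    rw [compl_iInter]
    exact isFSigma_iUnion fun n => (hU n).isClosed_compl.isFSigma'
  refine ⟨fun f => f ∘ φ, fun f₁ f₂ => rfl, fun c f => rfl, ?_, fun f x hx => by
    simp [Function.comp, hφA x hx], fun f hf x => hf _, rfl, ?_⟩
  · -- first Borel class
    intro f hf U hU
    obtain ⟨F, hF, hFU⟩ := hf U hU
    have : (f ∘ φ) ⁻¹' U = ⋃ n, φ ⁻¹' (F n) := by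
      rw [preimage_comp, hFU, preimage_iUnion]
    rw [this]
    refine isFSigma_iUnion fun n => ?_
    -- F n closed in A
    obtain ⟨C, hC, hCF⟩ := isClosed_induced_iff.1 (hF n)
    have key : φ ⁻¹' (F n) = (C ∩ A) ∪ (Aᶜ ∩ g ⁻¹' C) := by
      ext x
      simp only [mem_preimage, mem_union, mem_inter_iff, mem_compl_iff]
      by_cases hx : x ∈ A
      · rw [hφA x hx, ← hCF]
        simp [hx]
      · rw [hφA' x hx, ← hCF]
        simp [hx]
    rw [key]
    have h1 : IsFSigma (C ∩ A) := by rw [inter_comm]; exact hFσ.inter_closed hC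
    have h2 : IsFSigma (Aᶜ ∩ g ⁻¹' C) := by
      obtain ⟨D, hD, hDC⟩ := isClosed_induced_iff.1 (hC.preimage hg.restrict)
      have : Aᶜ ∩ g ⁻¹' C = Aᶜ ∩ D := by
        ext x
        simp only [mem_inter_iff, mem_compl_iff, mem_preimage, and_congr_right_iff]
        intro hx
        have := Set.ext_iff.1 hDC ⟨x, hx⟩
        simpa [Set.restrict] using this.symm
      rw [this]
      exact hAc.inter_closed hD
    exact h1.union' h2
  · intro f _
    have : (fun x => |(f ∘ φ) x|) = (fun a : A => |f a|) ∘ φ := rfl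
    rw [iSup, iSup, this, Set.range_comp, hφsurj.range_eq, Set.image_univ]
end

section
/- Let A ⊆ ℝ be both Fσ and Gδ, and suppose g : ℝ \ A → A is continuous. Then there exists a linear extension operator φ* from the space of Baire-one functions A → ℝ to the space of Baire-one functions ℝ → ℝ (i.e., φ*(f)|_A = f) that is positive, maps 1 to 1, and satisfies sup_{x∈ℝ} |φ*(f)(x)| = sup_{a∈A} |f(a)| for bounded f. -/
open Set Filter Topology

/-!
The operator is `f ↦ f ∘ φ` for the retraction `φ` that is the identity on `A` and `g` off `A`;
all algebraic properties and the sup-norm identity are then immediate, `φ` being onto `A`.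
For Baire-one `f = lim fₙ`, the point is that `fₙ ∘ φ` is continuous on each closed set
`Cₙ ∪ Kₙ`, where `Cₙ ↑ A` and `Kₙ ↑ ℝ \ A` are increasing closed exhaustions (they exist
because `A` is both `F_σ` and `G_δ`). Tietze extends `fₙ ∘ φ` from `Cₙ ∪ Kₙ` to a continuous
`Fₙ`, and every point lies in `Cₙ ∪ Kₙ` for all large `n`, so `Fₙ → f ∘ φ` pointwise.
-/

theorem IsFSigma.exists_monotone {X : Type*} [TopologicalSpace X] {s : Set X}
    (hs : IsFSigma s) :
    ∃ C : ℕ → Set X, Monotone C ∧ (∀ n, IsClosed (C n)) ∧ ⋃ n, C n = s := by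
  obtain ⟨F, hF, rfl⟩ := hs
  exact ⟨accumulate F, monotone_accumulate,
    fun n => (finite_Iic n).isClosed_biUnion fun i _ => hF i, iUnion_accumulate⟩

theorem IsGδ.isFSigma_compl {X : Type*} [TopologicalSpace X] {s : Set X} (hs : IsGδ s) :
    IsFSigma sᶜ := by
  obtain ⟨U, hU, rfl⟩ := hs.eq_iInter_nat
  exact ⟨fun n => (U n)ᶜ, fun n => (hU n).isClosed_compl, compl_iInter U⟩

universe u v

theorem IsClosed.exists_continuous_eqOn {X : Type u} {Y : Type v} [TopologicalSpace X]
    [NormalSpace X] [TopologicalSpace Y] [TietzeExtension.{u, v} Y] {s : Set X} {f : X → Y}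
    (hs : IsClosed s) (hf : ContinuousOn f s) : ∃ F : X → Y, Continuous F ∧ EqOn F f s := by
  obtain ⟨F, hF⟩ := ContinuousMap.exists_restrict_eq hs ⟨s.domRestrict f, hf.domRestrict⟩
  exact ⟨F, F.continuous, fun x hx => congrArg (· ⟨x, hx⟩) hF⟩

theorem exists_continuous_tendsto_of_continuousOn_monotone_closed
    {X : Type u} {Y : Type v} [TopologicalSpace X] [NormalSpace X] [TopologicalSpace Y]
    [TietzeExtension.{u, v} Y]
    {S : ℕ → Set X} (hS : Monotone S) (hSc : ∀ n, IsClosed (S n)) (hcover : ⋃ n, S n = univ)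
    {h : ℕ → X → Y} {l : X → Y} (hh : ∀ n, ContinuousOn (h n) (S n))
    (hl : ∀ x, Tendsto (fun n => h n x) atTop (𝓝 (l x))) :
    ∃ F : ℕ → X → Y, (∀ n, Continuous (F n)) ∧ ∀ x, Tendsto (fun n => F n x) atTop (𝓝 (l x)) := by
  choose F hF hFh using fun n => (hSc n).exists_continuous_eqOn (hh n)
  refine ⟨F, hF, fun x => ?_⟩
  obtain ⟨m, hm⟩ := mem_iUnion.1 (hcover.symm ▸ mem_univ x)
  refine (hl x).congr' ?_
  filter_upwards [eventually_ge_atTop m] with n hn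
  exact (hFh n (hS hn hm)).symm

namespace Set.MapsTo

variable {X : Type*} {s : Set X} {g : X → X} (hg : MapsTo g sᶜ s)

open Classical in
noncomputable def retraction : X → s :=
  fun x => if h : x ∈ s then ⟨x, h⟩ else ⟨g x, hg h⟩

theorem retraction_of_mem {x : X} (hx : x ∈ s) : hg.retraction x = ⟨x, hx⟩ :=
  dif_pos hx

theorem retraction_of_notMem {x : X} (hx : x ∉ s) : hg.retraction x = ⟨g x, hg hx⟩ :=
  dif_neg hx

theorem surjective_retraction : Function.Surjective hg.retraction :=
  fun a => ⟨a, hg.retraction_of_mem a.2⟩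

variable [TopologicalSpace X]

theorem continuousOn_retraction : ContinuousOn hg.retraction s := by
  rw [continuousOn_iff_continuous_domRestrict]
  convert continuous_id using 1
  funext x
  exact hg.retraction_of_mem x.2

theorem continuousOn_retraction_compl (hgc : ContinuousOn g sᶜ) :
    ContinuousOn hg.retraction sᶜ := by
  rw [continuousOn_iff_continuous_domRestrict]
  convert hgc.mapsToRestrict hg using 1
  funext x
  exact hg.retraction_of_notMem x.2

theorem continuousOn_retraction_union (hgc : ContinuousOn g sᶜ) {C K : Set X}
    (hC : IsClosed C) (hK : IsClosed K) (hCs : C ⊆ s) (hKs : K ⊆ sᶜ) :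
    ContinuousOn hg.retraction (C ∪ K) :=
  (hg.continuousOn_retraction.mono hCs).union_of_isClosed
    ((hg.continuousOn_retraction_compl hgc).mono hKs) hC hK

end Set.MapsTo

theorem extension_operator_baire_one (A : Set ℝ)
    (hFσ : IsFSigma A) (hGδ : IsGδ A)
    (g : ℝ → ℝ) (hg : ContinuousOn g Aᶜ) (hgA : MapsTo g Aᶜ A) :
    ∃ T : (A → ℝ) → (ℝ → ℝ),
      (∀ f₁ f₂ : A → ℝ, T (f₁ + f₂) = T f₁ + T f₂) ∧
      (∀ (c : ℝ) (f : A → ℝ), T (c • f) = c • T f) ∧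
      (∀ f : A → ℝ,
        (∃ fₙ : ℕ → A → ℝ, (∀ n, Continuous (fₙ n)) ∧
          ∀ a, Tendsto (fun n => fₙ n a) atTop (𝓝 (f a))) →
        ∃ Fₙ : ℕ → ℝ → ℝ, (∀ n, Continuous (Fₙ n)) ∧
          ∀ x, Tendsto (fun n => Fₙ n x) atTop (𝓝 (T f x))) ∧
      (∀ (f : A → ℝ) (x : ℝ) (hx : x ∈ A), T f x = f ⟨x, hx⟩) ∧
      (∀ f : A → ℝ, 0 ≤ f → 0 ≤ T f) ∧
      (T 1 = 1) ∧
      (∀ f : A → ℝ, Bornology.IsBounded (range f) →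
        (⨆ x : ℝ, |T f x|) = ⨆ a : A, |f a|) := by
  refine ⟨fun f => f ∘ hgA.retraction, fun _ _ => rfl, fun _ _ => rfl, ?_,
    fun f x hx => congrArg f (hgA.retraction_of_mem hx), fun f hf x => hf _, rfl,
    fun f _ => hgA.surjective_retraction.iSup_comp fun a => |f a|⟩
  rintro f ⟨fₙ, hfₙ, hlim⟩
  obtain ⟨C, hCmono, hCc, hCA⟩ := hFσ.exists_monotone
  obtain ⟨K, hKmono, hKc, hKA⟩ := hGδ.isFSigma_compl.exists_monotone
  have hcover : ⋃ n, (C n ∪ K n) = univ := by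
    rw [iUnion_union_distrib, hCA, hKA, union_compl_self]
  refine exists_continuous_tendsto_of_continuousOn_monotone_closed
    (fun m n hmn => union_subset_union (hCmono hmn) (hKmono hmn))
    (fun n => (hCc n).union (hKc n)) hcover
    (fun n => (hfₙ n).comp_continuousOn (hgA.continuousOn_retraction_union hg (hCc n) (hKc n)
      (hCA ▸ subset_iUnion C n) (hKA ▸ subset_iUnion K n))) fun x => hlim _
end
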